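/- Let p > 1 be an integer and m a positive integer. In the game N^m_{p,k} (Nim with m coins and p-index k) where k = min(p, m+1), the Sprague-Grundy number of a position (x^1, ..., x^m) equals x^1 ⊕_p ⋯ ⊕_p x^m. -/

import Mathlib

/-!
The `p`-ary digit sum `⊕` has the two properties that characterise the Sprague-Grundy function.

No move preserves it: if `ord_p (∑ dᵢ) = L = min ord_p dᵢ` for the differences `dᵢ = xᵢ - yᵢ`,
then every `dᵢ` is a multiple of `p^L`, the quotients `⌊xᵢ / p^L⌋` drop by `cᵢ = dᵢ / p^L`, and
`∑ cᵢ = (∑ dᵢ) / p^L` is prime to `p`, so the `L`-th digit of `⊕` changes.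

Every smaller value `u < ⊕ X` is reachable: let `L` be the highest digit where `u` and `⊕ X`
differ, by `δ ∈ (0, p)`. Lower the `L`-th digits of the coins by amounts `aᵢ` adding up to `δ`,
so fewer than `p` coins move, and let one moving coin take arbitrary lower digits to match those
of `u`. The total removed lies in `(0, p^(L+1))`, so its valuation `e` is at most `L`; the other
differences are multiples of `p^L`, so the adjusted one is a multiple of `p^e` too, and this is
the valuation condition.
-/

/-- The `L`-th digit of `x` in base `p`. -/
def digit (p L x : ℕ) : ℕ := x / p ^ L % p

/-- `p`-ary addition without carry of a finite family: the `L`-th `p`-ary digit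
is the sum of the `L`-th digits mod `p` (iterated `⊕_p`). -/
def oplusSum {ι : Type*} (p : ℕ) (s : Finset ι) (f : ι → ℕ) : ℕ :=
  ∑ L ∈ Finset.range (∑ i ∈ s, f i + 1), (∑ i ∈ s, digit p L (f i)) % p * p ^ L

/-- `p`-adic order of a natural number, with `ord 0 = ∞`. -/
noncomputable def ordE (p x : ℕ) : ℕ∞ := if x = 0 then ⊤ else (padicValNat p x : ℕ∞)

/-- Legal move in Nim with `m` coins and `p`-index `k`. -/
def NimMove (p k : ℕ) {m : ℕ} (X Y : Fin m → ℕ) : Prop :=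
  (∀ i, Y i ≤ X i) ∧
    0 < (Finset.univ.filter fun i => X i ≠ Y i).card ∧
    (Finset.univ.filter fun i => X i ≠ Y i).card < k ∧
    ordE p (∑ i, (X i - Y i)) = ⨅ i, ordE p (X i - Y i)

/-- Sprague-Grundy value computed with fuel bounding the total number of tokens:
`sgAux (n+1) X` is the minimum excludant of the values of the options of `X`. -/
noncomputable def sgAux (p k m : ℕ) : ℕ → (Fin m → ℕ) → ℕ
  | 0, _ => 0
  | n + 1, X => sInf {v : ℕ | ∀ Y : Fin m → ℕ, NimMove p k X Y → sgAux p k m n Y ≠ v}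

/-- The Sprague-Grundy function of `N^m_{p,k}` (every move strictly decreases the
total number of tokens, so `∑ X i + 1` units of fuel suffice). -/
noncomputable def nimSg (p k : ℕ) {m : ℕ} (X : Fin m → ℕ) : ℕ :=
  sgAux p k m (∑ i, X i + 1) X

open Finset

section Digits

variable {p : ℕ}

lemma digit_succ (L x : ℕ) : digit p (L + 1) x = digit p L (x / p) := by
  rw [digit, digit, Nat.div_div_eq_div_mul, pow_succ']

lemma digit_sum_range_mul_pow (hp : 1 < p) {g : ℕ → ℕ} (hg : ∀ ℓ, g ℓ < p) (N L : ℕ) :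
    digit p L (∑ ℓ ∈ range N, g ℓ * p ^ ℓ) = if L < N then g L else 0 := by
  induction N generalizing g L with
  | zero => simp [digit]
  | succ N ih =>
    have hsplit : ∑ ℓ ∈ range (N + 1), g ℓ * p ^ ℓ =
        g 0 + p * ∑ ℓ ∈ range N, g (ℓ + 1) * p ^ ℓ := by
      rw [sum_range_succ', mul_sum, add_comm]
      simp only [pow_zero, mul_one, pow_succ]
      congr 1
      exact sum_congr rfl fun ℓ _ => by ring
    cases L with
    | zero => simp [hsplit, digit, Nat.mod_eq_of_lt (hg 0)]
    | succ L =>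
      rw [hsplit, digit_succ, Nat.add_mul_div_left _ _ (by omega), Nat.div_eq_of_lt (hg 0),
        zero_add, ih fun ℓ => hg (ℓ + 1)]
      simp

lemma digit_oplusSum (hp : 1 < p) {ι : Type*} (s : Finset ι) (f : ι → ℕ) (L : ℕ) :
    digit p L (oplusSum p s f) = (∑ i ∈ s, digit p L (f i)) % p := by
  rw [oplusSum, digit_sum_range_mul_pow hp fun _ => Nat.mod_lt _ (by omega)]
  split_ifs with hL
  · rfl
  · have hzero : ∀ i ∈ s, digit p L (f i) = 0 := fun i hi => by
      have hlt : f i < p ^ L :=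
        ((single_le_sum (fun _ _ => Nat.zero_le _) hi).trans_lt (by omega)).trans
          (Nat.lt_pow_self hp)
      simp [digit, Nat.div_eq_of_lt hlt]
    simp [sum_eq_zero hzero]

lemma mod_pow_eq_of_digit_eq {a b : ℕ} (h : ∀ ℓ, digit p ℓ a = digit p ℓ b) (N : ℕ) :
    a % p ^ N = b % p ^ N := by
  induction N with
  | zero => simp [Nat.mod_one]
  | succ N ih => rw [Nat.mod_pow_succ, Nat.mod_pow_succ, ih, ← digit, ← digit, h]

lemma eq_of_digit_eq (hp : 1 < p) {a b : ℕ} (h : ∀ ℓ, digit p ℓ a = digit p ℓ b) : a = b := by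
  have ha : a < p ^ (a + b) := (Nat.lt_pow_self hp).trans_le' (by omega)
  have hb : b < p ^ (a + b) := (Nat.lt_pow_self hp).trans_le' (by omega)
  calc a = a % p ^ (a + b) := (Nat.mod_eq_of_lt ha).symm
    _ = b % p ^ (a + b) := mod_pow_eq_of_digit_eq h _
    _ = b := Nat.mod_eq_of_lt hb

lemma natCast_div_pow_eq_of_modEq {ℓ L x y : ℕ} (hℓ : ℓ < L) (h : x ≡ y [MOD p ^ L]) :
    ((x / p ^ ℓ : ℕ) : ZMod p) = ((y / p ^ ℓ : ℕ) : ZMod p) := by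
  have hL : p ^ L = p ^ ℓ * p ^ (L - ℓ) := by rw [← pow_add]; congr 1; omega
  have hhigh : x / p ^ ℓ % p ^ (L - ℓ) = y / p ^ ℓ % p ^ (L - ℓ) := by
    rw [← Nat.mod_mul_right_div_self, ← Nat.mod_mul_right_div_self, ← hL]
    exact congrArg (· / p ^ ℓ) h
  have hdvd : p ∣ p ^ (L - ℓ) := dvd_pow_self p (by omega)
  rw [ZMod.natCast_eq_natCast_iff', ← Nat.mod_mod_of_dvd _ hdvd, hhigh, Nat.mod_mod_of_dvd _ hdvd]

lemma exists_lt_pow_natCast_div_pow_eq (hp : 1 < p) (g : ℕ → ZMod p) (L : ℕ) :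
    ∃ r < p ^ L, ∀ ℓ < L, ((r / p ^ ℓ : ℕ) : ZMod p) = g ℓ := by
  have : NeZero p := ⟨by omega⟩
  induction L with
  | zero => exact ⟨0, by simp, fun ℓ h => absurd h (Nat.not_lt_zero ℓ)⟩
  | succ L ih =>
    obtain ⟨r, hr, hrg⟩ := ih
    refine ⟨r + p ^ L * (g L).val, ?_, fun ℓ hℓ => ?_⟩
    · calc r + p ^ L * (g L).val < p ^ L * ((g L).val + 1) := by rw [mul_add_one]; omega
        _ ≤ p ^ L * p := Nat.mul_le_mul_left _ (ZMod.val_lt _)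
        _ = p ^ (L + 1) := (pow_succ _ _).symm
    · rcases Nat.lt_succ_iff_lt_or_eq.1 hℓ with hℓ | rfl
      · rw [natCast_div_pow_eq_of_modEq hℓ (Nat.add_mul_mod_self_left _ _ _), hrg ℓ hℓ]
      · rw [Nat.add_mul_div_left _ _ (by positivity), Nat.div_eq_of_lt hr, zero_add,
          ZMod.natCast_zmod_val]

lemma sub_div_pow_eq_div_pow {q a j : ℕ} (ha : a ≤ q % p) (hj : j ≠ 0) :
    (q - a) / p ^ j = q / p ^ j := by
  obtain ⟨j, rfl⟩ := Nat.exists_eq_succ_of_ne_zero hj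
  have hdiv : (q - a) / p = q / p := by
    rcases Nat.eq_zero_or_pos p with rfl | hp
    · simp
    have := Nat.div_add_mod q p
    have := Nat.mod_lt q hp
    rw [show q - a = (q % p - a) + p * (q / p) by omega, Nat.add_mul_div_left _ _ hp,
      Nat.div_eq_of_lt (by omega), zero_add]
  rw [pow_succ', ← Nat.div_div_eq_div_mul, ← Nat.div_div_eq_div_mul, hdiv]

lemma exists_div_pow_eq_sub (hp : 1 < p) {u s : ℕ} (hus : u < s) :
    ∃ L δ, 0 < δ ∧ δ ≤ s / p ^ L % p ∧ u / p ^ L = s / p ^ L - δ := by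
  classical
  -- the least `j` with `u / p ^ j = s / p ^ j` is `L + 1`
  have hex : ∃ j, u / p ^ j = s / p ^ j :=
    ⟨s, by rw [Nat.div_eq_of_lt (hus.trans (Nat.lt_pow_self hp)),
      Nat.div_eq_of_lt (Nat.lt_pow_self hp)]⟩
  have hj0 : Nat.find hex ≠ 0 := fun h => by
    have := Nat.find_spec hex
    rw [h] at this
    simp only [pow_zero, Nat.div_one] at this
    omega
  obtain ⟨L, hL⟩ := Nat.exists_eq_succ_of_ne_zero hj0
  have hq : u / p ^ L / p = s / p ^ L / p := by
    rw [Nat.div_div_eq_div_mul, Nat.div_div_eq_div_mul, ← pow_succ]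
    simpa [hL] using Nat.find_spec hex
  have hne : u / p ^ L ≠ s / p ^ L := Nat.find_min hex (by omega)
  have hle : u / p ^ L ≤ s / p ^ L := Nat.div_le_div_right hus.le
  have hu := Nat.div_add_mod (u / p ^ L) p
  have hs := Nat.div_add_mod (s / p ^ L) p
  rw [hq] at hu
  exact ⟨L, s / p ^ L - u / p ^ L, by omega, by omega, by omega⟩

end Digits

section OplusSum

variable {p : ℕ} {ι : Type*}

theorem oplusSum_eq_iff (hp : 1 < p) (s : Finset ι) (f : ι → ℕ) (u : ℕ) :
    oplusSum p s f = u ↔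
      ∀ L, ∑ i ∈ s, ((f i / p ^ L : ℕ) : ZMod p) = ((u / p ^ L : ℕ) : ZMod p) := by
  have hdigits : ∀ L, ((oplusSum p s f / p ^ L : ℕ) : ZMod p) =
      ∑ i ∈ s, ((f i / p ^ L : ℕ) : ZMod p) := fun L => by
    rw [← ZMod.natCast_mod, ← digit, digit_oplusSum hp, ZMod.natCast_mod, Nat.cast_sum]
    simp only [digit, ZMod.natCast_mod]
  constructor
  · rintro rfl L
    exact (hdigits L).symm
  · exact fun h => eq_of_digit_eq hp fun L =>
      (ZMod.natCast_eq_natCast_iff' _ _ _).1 ((hdigits L).trans (h L))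

theorem oplusSum_eq_iff_div_pow (hp : 1 < p) (s : Finset ι) (f : ι → ℕ) (u L : ℕ) :
    oplusSum p s f = u ↔ oplusSum p s (fun i => f i / p ^ L) = u / p ^ L ∧
      ∀ ℓ < L, ∑ i ∈ s, ((f i / p ^ ℓ : ℕ) : ZMod p) = ((u / p ^ ℓ : ℕ) : ZMod p) := by
  simp only [oplusSum_eq_iff hp, Nat.div_div_eq_div_mul, ← pow_add]
  refine ⟨fun h => ⟨fun j => h (L + j), fun ℓ _ => h ℓ⟩, fun ⟨hhigh, hlow⟩ ℓ => ?_⟩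
  rcases lt_or_ge ℓ L with hℓ | hℓ
  · exact hlow ℓ hℓ
  · simpa [Nat.add_sub_cancel' hℓ] using hhigh (ℓ - L)

theorem oplusSum_sub_of_le_mod (hp : 1 < p) (s : Finset ι) {f a : ι → ℕ}
    (ha : ∀ i ∈ s, a i ≤ f i % p) (hsum : ∑ i ∈ s, a i ≤ oplusSum p s f % p) :
    oplusSum p s (fun i => f i - a i) = oplusSum p s f - ∑ i ∈ s, a i := by
  have hf := (oplusSum_eq_iff hp s f _).1 rfl
  rw [oplusSum_eq_iff hp]
  rintro (_ | j)
  · have := hf 0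
    simp only [pow_zero, Nat.div_one] at this ⊢
    rw [Nat.cast_sub (hsum.trans (Nat.mod_le _ _)), ← this, Nat.cast_sum, ← sum_sub_distrib]
    exact sum_congr rfl fun i hi => Nat.cast_sub ((ha i hi).trans (Nat.mod_le _ _))
  · rw [sub_div_pow_eq_div_pow hsum j.succ_ne_zero, ← hf]
    exact sum_congr rfl fun i hi => by rw [sub_div_pow_eq_div_pow (ha i hi) j.succ_ne_zero]

end OplusSum

section Valuation

variable {p : ℕ}

lemma ordE_eq_emultiplicity (hp : p ≠ 1) (x : ℕ) : ordE p x = emultiplicity p x := by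
  rw [ordE]
  split_ifs with hx
  · simp [hx]
  · exact padicValNat_eq_emultiplicity_of_ne_one hp hx

lemma pow_dvd_iff_le_ordE (hp : p ≠ 1) {k x : ℕ} : p ^ k ∣ x ↔ (k : ℕ∞) ≤ ordE p x := by
  rw [ordE_eq_emultiplicity hp, pow_dvd_iff_le_emultiplicity]

variable {ι : Type*} [Fintype ι]

lemma iInf_ordE_le_ordE_sum (hp : p ≠ 1) (d : ι → ℕ) :
    ⨅ i, ordE p (d i) ≤ ordE p (∑ i, d i) := by
  refine ENat.forall_natCast_le_iff_le.1 fun k hk => (pow_dvd_iff_le_ordE hp).1 ?_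
  exact dvd_sum fun i _ => (pow_dvd_iff_le_ordE hp).2 (hk.trans (iInf_le _ i))

lemma ordE_sum_eq_iInf_iff (hp : p ≠ 1) (d : ι → ℕ) :
    ordE p (∑ i, d i) = ⨅ i, ordE p (d i) ↔ ∀ i, ordE p (∑ i, d i) ≤ ordE p (d i) := by
  rw [le_antisymm_iff, and_iff_left (iInf_ordE_le_ordE_sum hp d), le_iInf_iff]

lemma ordE_sum_le_of_pow_dvd (hp : 1 < p) {d : ι → ℕ} {L : ℕ} (i₀ : ι)
    (hpos : 0 < ∑ i, d i) (hlt : ∑ i, d i < p ^ (L + 1)) (hdvd : ∀ i ≠ i₀, p ^ L ∣ d i)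
    (i : ι) : ordE p (∑ i, d i) ≤ ordE p (d i) := by
  classical
  set e := padicValNat p (∑ i, d i)
  have he : p ^ e ∣ ∑ i, d i := pow_padicValNat_dvd
  have heL : e ≤ L := by
    by_contra! h
    have := Nat.le_of_dvd hpos ((pow_dvd_pow p (show L + 1 ≤ e by omega)).trans he)
    omega
  have hother : ∀ j ≠ i₀, p ^ e ∣ d j := fun j hj => (pow_dvd_pow p heL).trans (hdvd j hj)
  have hi : p ^ e ∣ d i := by
    rcases eq_or_ne i i₀ with rfl | hi
    · rw [← add_sum_erase _ _ (mem_univ i)] at he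
      exact (Nat.dvd_add_left (dvd_sum fun j hj => hother j (ne_of_mem_erase hj))).1 he
    · exact hother i hi
  rw [ordE, if_neg hpos.ne']
  exact (pow_dvd_iff_le_ordE (by omega)).1 hi

end Valuation

lemma exists_le_sum_eq {ι : Type*} [Fintype ι] (f : ι → ℕ) {t : ℕ} (ht : t ≤ ∑ i, f i) :
    ∃ a : ι → ℕ, (∀ i, a i ≤ f i) ∧ ∑ i, a i = t := by
  classical
  induction t with
  | zero => exact ⟨0, fun i => Nat.zero_le _, by simp⟩
  | succ t ih =>
    obtain ⟨a, hle, hsum⟩ := ih (by omega)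
    obtain ⟨i, -, hi⟩ := exists_lt_of_sum_lt (show ∑ i, a i < ∑ i, f i by omega)
    refine ⟨a + Pi.single i 1, fun j => ?_, by simp [sum_add_distrib, hsum]⟩
    rcases eq_or_ne j i with rfl | hj
    · simpa using hi
    · simpa [hj] using hle j

lemma card_filter_ne_zero_le_sum {ι : Type*} (s : Finset ι) (a : ι → ℕ) :
    (s.filter fun i => a i ≠ 0).card ≤ ∑ i ∈ s, a i := by
  have := card_nsmul_le_sum (s.filter fun i => a i ≠ 0) a 1 fun i hi => by
    simpa [Nat.one_le_iff_ne_zero] using (mem_filter.1 hi).2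
  rw [smul_eq_mul, mul_one] at this
  exact this.trans (sum_le_sum_of_subset (filter_subset _ _))

lemma sum_lt_pow_succ_of_eq_pow_mul {ι : Type*} [Fintype ι] {p L : ℕ} {a d : ι → ℕ} (i₀ : ι)
    (ha : ∑ i, a i < p) (hd : ∀ i ≠ i₀, d i = p ^ L * a i) (hd₀ : d i₀ < p ^ L * (a i₀ + 1)) :
    ∑ i, d i < p ^ (L + 1) := by
  classical
  calc ∑ i, d i = d i₀ + ∑ i ∈ univ.erase i₀, p ^ L * a i := by
        rw [← add_sum_erase _ _ (mem_univ i₀), sum_congr rfl fun i hi => hd i (ne_of_mem_erase hi)]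
    _ < p ^ L * (a i₀ + 1) + ∑ i ∈ univ.erase i₀, p ^ L * a i := by omega
    _ = p ^ L * (∑ i, a i + 1) := by rw [← add_sum_erase _ _ (mem_univ i₀), ← mul_sum]; ring
    _ ≤ p ^ L * p := Nat.mul_le_mul_left _ ha
    _ = p ^ (L + 1) := (pow_succ _ _).symm

section Moves

variable {p k m : ℕ}

lemma sum_lt_sum_of_nimMove {X Y : Fin m → ℕ} (h : NimMove p k X Y) : ∑ i, Y i < ∑ i, X i := by
  obtain ⟨hle, hpos, -, -⟩ := h
  obtain ⟨i, hi⟩ := card_pos.1 hpos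
  exact sum_lt_sum (fun j _ => hle j)
    ⟨i, mem_univ i, lt_of_le_of_ne (hle i) (mem_filter.1 hi).2.symm⟩

theorem oplusSum_ne_of_nimMove (hp : 1 < p) {X Y : Fin m → ℕ} (h : NimMove p k X Y) :
    oplusSum p univ Y ≠ oplusSum p univ X := by
  have hlt := sum_lt_sum_of_nimMove h
  obtain ⟨hle, -, -, hord⟩ := h
  have hD : ∑ i, (X i - Y i) ≠ 0 := by
    have : ∑ i, (X i - Y i) + ∑ i, Y i = ∑ i, X i := by
      rw [← sum_add_distrib]
      exact sum_congr rfl fun i _ => Nat.sub_add_cancel (hle i)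
    omega
  set L := padicValNat p (∑ i, (X i - Y i))
  have hDL : ordE p (∑ i, (X i - Y i)) = L := if_neg hD
  rw [ordE_sum_eq_iInf_iff (by omega)] at hord
  have hdvd : ∀ i, p ^ L ∣ X i - Y i := fun i => (pow_dvd_iff_le_ordE (by omega)).2 (hDL ▸ hord i)
  have hndvd : ¬ p ^ (L + 1) ∣ ∑ i, (X i - Y i) := fun h => by
    have := (pow_dvd_iff_le_ordE (by omega)).1 h
    rw [hDL, Nat.cast_le] at this
    omega
  choose c hc using hdvd
  have hdiv : ∀ i, X i / p ^ L = Y i / p ^ L + c i := fun i => by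
    have := hle i
    rw [show X i = Y i + p ^ L * c i by have := hc i; omega,
      Nat.add_mul_div_left _ _ (by positivity)]
  intro heq
  have hsum : ∑ i, ((Y i / p ^ L : ℕ) : ZMod p) = ∑ i, ((X i / p ^ L : ℕ) : ZMod p) :=
    ((oplusSum_eq_iff hp _ _ _).1 heq L).trans ((oplusSum_eq_iff hp _ _ _).1 rfl L).symm
  simp only [hdiv, Nat.cast_add, sum_add_distrib, left_eq_add, ← Nat.cast_sum,
    ZMod.natCast_eq_zero_iff] at hsum
  obtain ⟨t, ht⟩ := hsum
  refine hndvd ⟨t, ?_⟩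
  rw [sum_congr rfl fun i _ => hc i, ← mul_sum, ht, pow_succ, mul_assoc]

theorem nimMove_of_sub_digit (hp : 1 < p) {L : ℕ} {X a R : Fin m → ℕ} {i₀ : Fin m}
    (ha : ∑ i, a i < p) (haX : ∀ i, a i ≤ X i / p ^ L) (hi₀ : a i₀ ≠ 0)
    (hR : ∀ i, R i < p ^ L) (hRX : ∀ i ≠ i₀, R i = X i % p ^ L) :
    NimMove p (min p (m + 1)) X (fun i => p ^ L * (X i / p ^ L - a i) + R i) := by
  set P := p ^ L
  set Y := fun i => P * (X i / P - a i) + R i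
  have hY : ∀ i, Y i + P * a i + X i % P = X i + R i := fun i => by
    have h1 := Nat.div_add_mod (X i) P
    have h2 : P * (X i / P - a i) + P * a i = P * (X i / P) := by
      rw [← mul_add, Nat.sub_add_cancel (haX i)]
    simp only [Y]
    omega
  have hXP : ∀ i, X i % P < P := fun i => Nat.mod_lt _ (by positivity)
  have hlt : ∀ i, a i ≠ 0 → Y i < X i := fun i hai => by
    have := hY i
    have := hR i
    have : P ≤ P * a i := Nat.le_mul_of_pos_right _ (Nat.pos_of_ne_zero hai)
    omega
  have heq : ∀ i, a i = 0 → Y i = X i := fun i hai => by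
    have := hY i
    rw [hai, mul_zero, hRX i (by rintro rfl; exact hi₀ hai)] at this
    omega
  have hle : ∀ i, Y i ≤ X i := fun i =>
    (eq_or_ne (a i) 0).elim (fun h => (heq i h).le) fun h => (hlt i h).le
  have hd : ∀ i ≠ i₀, X i - Y i = P * a i := fun i hi => by
    have := hY i
    rw [hRX i hi] at this
    omega
  have hd₀ : X i₀ - Y i₀ < P * (a i₀ + 1) := by
    have := hY i₀
    have := hXP i₀
    rw [mul_add_one]
    omega
  have hsub : (univ.filter fun i => X i ≠ Y i) ⊆ univ.filter fun i => a i ≠ 0 := fun i => by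
    simpa only [mem_filter, mem_univ, true_and] using mt fun h => (heq i h).symm
  have hpos : 0 < ∑ i, (X i - Y i) := (Nat.sub_pos_of_lt (hlt i₀ hi₀)).trans_le
    (single_le_sum (f := fun i => X i - Y i) (fun _ _ => Nat.zero_le _) (mem_univ i₀))
  refine ⟨hle, card_pos.2 ⟨i₀, by simpa using (hlt i₀ hi₀).ne'⟩,
    lt_min ((card_le_card hsub).trans_lt ((card_filter_ne_zero_le_sum _ a).trans_lt ha)) ?_,
    (ordE_sum_eq_iInf_iff (by omega) _).2 (ordE_sum_le_of_pow_dvd hp i₀ hpos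
      (sum_lt_pow_succ_of_eq_pow_mul i₀ ha hd hd₀) fun i hi => ⟨a i, hd i hi⟩)⟩
  exact (card_filter_le _ _).trans_lt (by simp)

theorem exists_nimMove_oplusSum_eq (hp : 1 < p) (X : Fin m → ℕ) {u : ℕ}
    (hu : u < oplusSum p univ X) :
    ∃ Y, NimMove p (min p (m + 1)) X Y ∧ oplusSum p univ Y = u := by
  classical
  set s := oplusSum p univ X
  obtain ⟨L, δ, hδ0, hδs, huL⟩ := exists_div_pow_eq_sub hp hu
  set P := p ^ L
  have hs : oplusSum p univ (fun i => X i / P) = s / P :=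
    ((oplusSum_eq_iff_div_pow hp _ _ _ L).1 rfl).1
  have hδX : δ ≤ ∑ i, X i / P % p := by
    have := digit_oplusSum hp univ (fun i => X i / P) 0
    simp only [digit, pow_zero, Nat.div_one, hs] at this
    exact hδs.trans (this ▸ Nat.mod_le _ _)
  obtain ⟨a, haX, ha⟩ := exists_le_sum_eq _ hδX
  obtain ⟨i₀, -, hi₀⟩ := exists_ne_zero_of_sum_ne_zero (ha.trans_ne hδ0.ne')
  obtain ⟨r, hrP, hr⟩ := exists_lt_pow_natCast_div_pow_eq hp
    (fun ℓ => ((u / p ^ ℓ : ℕ) : ZMod p) - ∑ i ∈ univ.erase i₀, ((X i / p ^ ℓ : ℕ) : ZMod p)) L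
  set R := Function.update (fun i => X i % P) i₀ r
  have hR : ∀ i, R i < P := fun i => by
    rcases eq_or_ne i i₀ with rfl | hi
    · simpa [R] using hrP
    · simpa [R, hi] using Nat.mod_lt _ (by positivity)
  have hRX : ∀ i ≠ i₀, R i = X i % P := fun i hi => by simp [R, hi]
  refine ⟨_, nimMove_of_sub_digit hp (ha ▸ hδs.trans_lt (Nat.mod_lt _ (by omega)))
    (fun i => (haX i).trans (Nat.mod_le _ _)) hi₀ hR hRX, ?_⟩
  rw [oplusSum_eq_iff_div_pow hp _ _ _ L]
  constructor
  · have hhigh : ∀ i, (P * (X i / P - a i) + R i) / P = X i / P - a i := fun i => by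
      rw [Nat.mul_add_div (by positivity), Nat.div_eq_of_lt (hR i), add_zero]
    change oplusSum p univ (fun i => (P * (X i / P - a i) + R i) / P) = u / P
    simp only [hhigh]
    rw [oplusSum_sub_of_le_mod hp _ (fun i _ => haX i) (by rw [ha, hs]; exact hδs), ha, hs, huL]
  · intro ℓ hℓ
    have hlow : ∀ i, (((P * (X i / P - a i) + R i) / p ^ ℓ : ℕ) : ZMod p) =
        ((R i / p ^ ℓ : ℕ) : ZMod p) := fun i =>
      natCast_div_pow_eq_of_modEq hℓ (Nat.mul_add_mod_self_left _ _ _)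
    rw [sum_congr rfl fun i _ => hlow i, ← add_sum_erase _ _ (mem_univ i₀),
      sum_congr rfl fun i hi => by
        rw [hRX i (ne_of_mem_erase hi), natCast_div_pow_eq_of_modEq hℓ (Nat.mod_modEq _ _)]]
    rw [show R i₀ = r by simp [R], hr ℓ hℓ, sub_add_cancel]

end Moves

def IsGrundyFunction (p k : ℕ) {m : ℕ} (f : (Fin m → ℕ) → ℕ) : Prop :=
  (∀ X Y, NimMove p k X Y → f Y ≠ f X) ∧ ∀ X u, u < f X → ∃ Y, NimMove p k X Y ∧ f Y = u

theorem IsGrundyFunction.sgAux_eq {p k m : ℕ} {f : (Fin m → ℕ) → ℕ} (hf : IsGrundyFunction p k f)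
    (n : ℕ) (X : Fin m → ℕ) (hX : ∑ i, X i < n) : sgAux p k m n X = f X := by
  induction n generalizing X with
  | zero => omega
  | succ n ih =>
    have hopt : ∀ Y, NimMove p k X Y → sgAux p k m n Y = f Y := fun Y hY =>
      ih Y (by have := sum_lt_sum_of_nimMove hY; omega)
    have hmem : f X ∈ {v | ∀ Y, NimMove p k X Y → sgAux p k m n Y ≠ v} := fun Y hY =>
      (hopt Y hY).trans_ne (hf.1 X Y hY)
    rw [sgAux]
    refine le_antisymm (Nat.sInf_le hmem) (le_csInf ⟨_, hmem⟩ fun v hv => not_lt.1 fun hvX => ?_)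
    obtain ⟨Y, hY, rfl⟩ := hf.2 X v hvX
    exact hv Y hY (hopt Y hY)

theorem IsGrundyFunction.nimSg_eq {p k m : ℕ} {f : (Fin m → ℕ) → ℕ} (hf : IsGrundyFunction p k f)
    (X : Fin m → ℕ) : nimSg p k X = f X :=
  hf.sgAux_eq _ X (Nat.lt_succ_self _)

theorem isGrundyFunction_oplusSum {p m : ℕ} (hp : 1 < p) :
    IsGrundyFunction p (min p (m + 1)) (oplusSum (ι := Fin m) p univ) :=
  ⟨fun _ _ h => oplusSum_ne_of_nimMove hp h, fun X _ hu => exists_nimMove_oplusSum_eq hp X hu⟩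

theorem stmt3_general (p m : ℕ) (hp : 1 < p) (X : Fin m → ℕ) :
    nimSg p (min p (m + 1)) X = oplusSum p Finset.univ X :=
  (isGrundyFunction_oplusSum hp).nimSg_eq X

theorem stmt3 (p m : ℕ) (hp : 1 < p) (hm : 1 ≤ m) (X : Fin m → ℕ) :
    nimSg p (min p (m + 1)) X = oplusSum p Finset.univ X :=
  stmt3_general p m hp X
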